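/- arXiv:2512.25030 — 2 statements merged into one kernel-verified Lean document; each statement's English description precedes it below -/
import Mathlib

section
/- Mean and covariance of the multivariate gamma subordinator: for every t > 0 and all indices i, j ∈ {1,…,q}, (a) ∫_{(0,∞)^q} x_i · g(x,t) dx = λt / (a_i (1−θ)); (b) if i ≠ j then ∫_{(0,∞)^q} x_i x_j · g(x,t) dx = λt(λt+θ) / (a_i a_j (1−θ)^2), so that the covariance ∫ x_i x_j g dx − (∫ x_i g dx)(∫ x_j g dx) equals λt·θ / (a_i a_j (1−θ)^2); (c) if i = j the covariance (variance) ∫ x_i^2 g dx − (∫ x_i g dx)^2 equals λt / (a_i^2 (1−θ)^2). -/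
/-!
Writing `s = λt` and `(r)ₙ` for the rising factorial, the series defining `g` is a mixture
`g(x, t) = ∑ₙ pₙ ∏ᵢ γ(n + s, aᵢ)(xᵢ)` of products of gamma densities, with negative binomial
weights `pₙ = (1 - θ)ˢ (s)ₙ θⁿ / n!`; these sum to `1` by the binomial series for `(1 - θ)^(-s)`.
Integrating term by term (all terms are nonnegative), a monomial moment `∫ ∏ᵢ xᵢ^wᵢ g` becomes
`∑ₙ pₙ ∏ᵢ (n + s)_{wᵢ} / aᵢ^wᵢ`. Since `(s)ₙ (s + n)ₘ = (s)ₘ (s + m)ₙ`, the weights satisfy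
`∑ₙ pₙ (n + s)ₘ = (s)ₘ / (1 - θ)ᵐ`, which gives every first and second moment.
-/

open scoped BigOperators
open MeasureTheory

/-- The density of the multivariate gamma subordinator at point `x` and time `t`. -/
noncomputable def mvGammaPdf (q : ℕ) (lam θ : ℝ) (a : Fin q → ℝ) (x : Fin q → ℝ) (t : ℝ) : ℝ :=
  ((1 - θ) ^ (lam * t) / Real.Gamma (lam * t)) *
    ∑' n : ℕ, (θ ^ n / ((n.factorial : ℝ) * Real.Gamma ((n : ℝ) + lam * t) ^ (q - 1))) *
      ∏ i, ((a i * x i) ^ ((n : ℝ) + lam * t) / x i * Real.exp (-(a i * x i)))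

open Set Real ProbabilityTheory
open scoped Nat

lemma Real.Gamma_add_nat {r : ℝ} (hr : 0 < r) (n : ℕ) :
    Gamma (r + n) = (ascPochhammer ℝ n).eval r * Gamma r := by
  induction n with
  | zero => simp
  | succ n ih =>
    rw [Nat.cast_succ, ← add_assoc, Gamma_add_one (by positivity), ih, ascPochhammer_succ_eval]
    ring

lemma ascPochhammer_eval_mul_eval_add {S : Type*} [CommSemiring S] (r : S) (n m : ℕ) :
    (ascPochhammer S n).eval r * (ascPochhammer S m).eval (r + n) =
      (ascPochhammer S (n + m)).eval r := by
  rw [← ascPochhammer_mul, Polynomial.eval_mul, Polynomial.eval_comp]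
  simp

lemma Ring.choose_add_sub_one_eq_ascPochhammer_div (r : ℝ) (n : ℕ) :
    Ring.choose (r + n - 1) n = (ascPochhammer ℝ n).eval r / n ! := by
  rw [Ring.choose_eq_smul, Polynomial.descPochhammer_smeval_eq_ascPochhammer,
    show r + n - 1 - n + 1 = r by ring, Polynomial.ascPochhammer_smeval_eq_eval, smul_eq_mul,
    inv_mul_eq_div]

lemma Fintype.prod_apply_pi_single {ι N M : Type*} [Fintype ι] [DecidableEq ι] [Zero N]
    [CommMonoid M] {f : ι → N → M} (hf : ∀ k, f k 0 = 1) (i : ι) (m : N) :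
    ∏ k, f k ((Pi.single i m : ι → N) k) = f i m := by
  rw [Fintype.prod_eq_single i fun k hk => by rw [Pi.single_eq_of_ne hk, hf], Pi.single_eq_same]

lemma integral_tsum_of_nonneg_of_hasSum {α : Type*} [MeasurableSpace α] {μ : Measure α}
    {F : ℕ → α → ℝ} (hF : ∀ n, Integrable (F n) μ) (hF_nonneg : ∀ n, 0 ≤ᵐ[μ] F n) {S : ℝ}
    (hS : HasSum (fun n => ∫ x, F n x ∂μ) S) :
    ∫ x, ∑' n, F n x ∂μ = S := by
  have hnorm (n : ℕ) : ∫ x, ‖F n x‖ ∂μ = ∫ x, F n x ∂μ :=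
    integral_congr_ae <| (hF_nonneg n).mono fun _ hx => norm_of_nonneg hx
  exact (hasSum_integral_of_summable_integral_norm hF
    (hS.summable.congr fun n => (hnorm n).symm)).unique hS

section SetIntegralPi

variable {ι E : Type*} [Fintype ι] [MeasureSpace E] [SigmaFinite (volume : Measure E)]

lemma setIntegral_univ_pi_prod (s : ι → Set E) (f : ι → E → ℝ) :
    ∫ x in univ.pi s, ∏ i, f i (x i) = ∏ i, ∫ y in s i, f i y := by
  rw [volume_pi, Measure.restrict_pi_pi]
  exact integral_fintype_prod_eq_prod f

lemma IntegrableOn.univ_pi_prod {s : ι → Set E} {f : ι → E → ℝ}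
    (hf : ∀ i, IntegrableOn (f i) (s i)) :
    IntegrableOn (fun x : ι → E => ∏ i, f i (x i)) (univ.pi s) := by
  rw [IntegrableOn, volume_pi, Measure.restrict_pi_pi]
  exact Integrable.fintype_prod hf

end SetIntegralPi

noncomputable def negBinomialPMFReal (r θ : ℝ) (n : ℕ) : ℝ :=
  (1 - θ) ^ r * (ascPochhammer ℝ n).eval r * θ ^ n / n !

section NegBinomial

variable {r θ : ℝ}

lemma negBinomialPMFReal_nonneg (hr : 0 < r) (hθ0 : 0 ≤ θ) (hθ1 : θ ≤ 1) (n : ℕ) :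
    0 ≤ negBinomialPMFReal r θ n := by
  have := ascPochhammer_pos n r hr
  have : 0 ≤ (1 - θ) ^ r := rpow_nonneg (by linarith) r
  unfold negBinomialPMFReal
  positivity

lemma hasSum_negBinomialPMFReal (hθ : |θ| < 1) : HasSum (negBinomialPMFReal r θ) 1 := by
  have h1θ : 0 < 1 - θ := by linarith [le_abs_self θ]
  have h := (one_div_one_sub_rpow_hasFPowerSeriesOnBall_zero r).hasSum (y := θ)
    (by simpa [enorm_eq_nnnorm, ← NNReal.coe_lt_coe] using hθ)
  simp only [FormalMultilinearSeries.ofScalars_apply_eq, smul_eq_mul, zero_add,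
    Ring.choose_add_sub_one_eq_ascPochhammer_div] at h
  rw [show (1 : ℝ) = (1 - θ) ^ r * (1 / (1 - θ) ^ r) by field_simp]
  exact (h.mul_left _).congr_fun fun n => by unfold negBinomialPMFReal; ring

lemma hasSum_negBinomialPMFReal_mul_ascPochhammer (hθ : |θ| < 1) (m : ℕ) :
    HasSum (fun n => negBinomialPMFReal r θ n * (ascPochhammer ℝ m).eval (n + r))
      ((ascPochhammer ℝ m).eval r / (1 - θ) ^ m) := by
  have h1θ : 0 < 1 - θ := by linarith [le_abs_self θ]
  rw [← mul_one ((ascPochhammer ℝ m).eval r / (1 - θ) ^ m)]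
  refine ((hasSum_negBinomialPMFReal (r := r + m) hθ).mul_left _).congr_fun fun n => ?_
  -- both sides are `r⁽ⁿ⁺ᵐ⁾`, split in the two possible orders
  have key : (ascPochhammer ℝ n).eval r * (ascPochhammer ℝ m).eval (r + n) =
      (ascPochhammer ℝ m).eval r * (ascPochhammer ℝ n).eval (r + m) := by
    rw [ascPochhammer_eval_mul_eval_add, ascPochhammer_eval_mul_eval_add, add_comm n m]
  unfold negBinomialPMFReal
  rw [add_comm (n : ℝ) r, rpow_add h1θ, rpow_natCast]
  field_simp
  linear_combination θ ^ n * key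

lemma hasSum_negBinomialPMFReal_mul_add_sq (hθ : |θ| < 1) :
    HasSum (fun n => negBinomialPMFReal r θ n * (n + r) ^ 2) (r * (r + θ) / (1 - θ) ^ 2) := by
  have h1θ : 0 < 1 - θ := by linarith [le_abs_self θ]
  have h := (hasSum_negBinomialPMFReal_mul_ascPochhammer (r := r) hθ 2).sub
    (hasSum_negBinomialPMFReal_mul_ascPochhammer (r := r) hθ 1)
  simp only [ascPochhammer_succ_eval, ascPochhammer_one, Polynomial.eval_X, Nat.cast_one,
    pow_one] at h
  rw [show r * (r + θ) / (1 - θ) ^ 2 = r * (r + 1) / (1 - θ) ^ 2 - r / (1 - θ) by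
    field_simp; ring]
  exact h.congr_fun fun n => by ring

end NegBinomial

section GammaPDF

variable {a r : ℝ}

lemma gammaPDFReal_of_pos (hr : 0 ≤ r) {x : ℝ} (hx : 0 < x) :
    gammaPDFReal a r x = (r * x) ^ a / x * exp (-(r * x)) / Gamma a := by
  rw [gammaPDFReal, if_pos hx.le, mul_rpow hr hx.le, rpow_sub_one hx.ne']
  ring

lemma pow_mul_gammaPDFReal_of_pos (k : ℕ) {x : ℝ} (hx : 0 < x) :
    x ^ k * gammaPDFReal a r x = r ^ a / Gamma a * (x ^ (a + k - 1) * exp (-(r * x))) := by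
  rw [gammaPDFReal, if_pos hx.le, add_sub_right_comm, rpow_add hx, rpow_natCast]
  ring

lemma integrableOn_pow_mul_gammaPDFReal (ha : 0 < a) (hr : 0 < r) (k : ℕ) :
    IntegrableOn (fun x => x ^ k * gammaPDFReal a r x) (Ioi 0) := by
  have h := integrableOn_rpow_mul_exp_neg_mul_rpow (s := a + k - 1) (p := 1)
    (by have : (0 : ℝ) ≤ k := k.cast_nonneg; linarith) one_pos hr
  simp only [rpow_one, neg_mul] at h
  exact IntegrableOn.congr_fun (h.const_mul (r ^ a / Gamma a))
    (fun x hx => (pow_mul_gammaPDFReal_of_pos k hx).symm) measurableSet_Ioi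

lemma integral_Ioi_pow_mul_gammaPDFReal (ha : 0 < a) (hr : 0 < r) (k : ℕ) :
    ∫ x in Ioi 0, x ^ k * gammaPDFReal a r x = (ascPochhammer ℝ k).eval a / r ^ k := by
  have := Gamma_pos_of_pos ha
  rw [setIntegral_congr_fun measurableSet_Ioi fun x hx => pow_mul_gammaPDFReal_of_pos k hx,
    integral_const_mul, integral_rpow_mul_exp_neg_mul_Ioi (by positivity) hr, Gamma_add_nat ha,
    div_rpow zero_le_one hr.le, one_rpow, rpow_add hr, rpow_natCast]
  field_simp

end GammaPDF

section MvGammaPdf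

variable {q : ℕ} {lam θ t : ℝ} {a : Fin q → ℝ}

lemma mvGammaPdf_eq_tsum (hq : 0 < q) (hs : 0 < lam * t) (ha : ∀ i, 0 ≤ a i) {x : Fin q → ℝ}
    (hx : ∀ i, 0 < x i) :
    mvGammaPdf q lam θ a x t =
      ∑' n : ℕ, negBinomialPMFReal (lam * t) θ n * ∏ i, gammaPDFReal (n + lam * t) (a i) (x i) := by
  obtain ⟨k, rfl⟩ : ∃ k, q = k + 1 := ⟨q - 1, by omega⟩
  rw [mvGammaPdf, ← tsum_mul_left]
  refine tsum_congr fun n => ?_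
  have := Gamma_pos_of_pos hs
  have := ascPochhammer_pos n _ hs
  simp only [gammaPDFReal_of_pos (ha _) (hx _), Finset.prod_div_distrib, Finset.prod_const,
    Finset.card_univ, Fintype.card_fin, Nat.add_sub_cancel]
  rw [add_comm (n : ℝ), Gamma_add_nat hs, negBinomialPMFReal, pow_succ]
  field_simp

lemma integral_prod_pow_mul_mvGammaPdf_of_hasSum (hq : 0 < q) (hs : 0 < lam * t)
    (ha : ∀ i, 0 < a i) (hθ0 : 0 ≤ θ) (hθ1 : θ ≤ 1) (w : Fin q → ℕ) {S : ℝ}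
    (hS : HasSum (fun n : ℕ => negBinomialPMFReal (lam * t) θ n *
      ∏ i, (ascPochhammer ℝ (w i)).eval (n + lam * t) / a i ^ w i) S) :
    ∫ x in univ.pi fun _ => Ioi (0 : ℝ), (∏ i, x i ^ w i) * mvGammaPdf q lam θ a x t = S := by
  set F : ℕ → (Fin q → ℝ) → ℝ := fun n x => negBinomialPMFReal (lam * t) θ n *
    ∏ i, (x i ^ w i * gammaPDFReal (n + lam * t) (a i) (x i))
  have hns (n : ℕ) : 0 < n + lam * t := by positivity
  have hmeas : MeasurableSet (univ.pi fun _ : Fin q => Ioi (0 : ℝ)) :=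
    .univ_pi fun _ => measurableSet_Ioi
  have hF_int (n : ℕ) : IntegrableOn (F n) (univ.pi fun _ => Ioi 0) :=
    (IntegrableOn.univ_pi_prod fun i =>
      integrableOn_pow_mul_gammaPDFReal (hns n) (ha i) (w i)).const_mul _
  have hF_nonneg (n : ℕ) : 0 ≤ᵐ[volume.restrict (univ.pi fun _ => Ioi 0)] F n :=
    (ae_restrict_mem hmeas).mono fun x hx =>
      mul_nonneg (negBinomialPMFReal_nonneg hs hθ0 hθ1 n) <| Finset.prod_nonneg fun i _ =>
        mul_nonneg (pow_nonneg (hx i (mem_univ i)).le _) (gammaPDFReal_nonneg (hns n) (ha i) _)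
  have hF_integral (n : ℕ) : ∫ x in univ.pi fun _ => Ioi 0, F n x =
      negBinomialPMFReal (lam * t) θ n *
        ∏ i, (ascPochhammer ℝ (w i)).eval (n + lam * t) / a i ^ w i := by
    rw [integral_const_mul, setIntegral_univ_pi_prod _ fun i y =>
      y ^ w i * gammaPDFReal (n + lam * t) (a i) y]
    simp only [integral_Ioi_pow_mul_gammaPDFReal (hns n) (ha _)]
  have hF_tsum : ∀ x ∈ univ.pi fun _ => Ioi (0 : ℝ),
      (∏ i, x i ^ w i) * mvGammaPdf q lam θ a x t = ∑' n, F n x := fun x hx => by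
    rw [mvGammaPdf_eq_tsum hq hs (fun i => (ha i).le) fun i => hx i (mem_univ i),
      ← tsum_mul_left]
    refine tsum_congr fun n => ?_
    simp only [F, Finset.prod_mul_distrib]
    ring
  rw [setIntegral_congr_fun hmeas hF_tsum]
  exact integral_tsum_of_nonneg_of_hasSum hF_int hF_nonneg (hS.congr_fun hF_integral)

lemma integral_pow_mul_mvGammaPdf (hs : 0 < lam * t) (ha : ∀ i, 0 < a i) (hθ0 : 0 ≤ θ)
    (hθ1 : θ < 1) (i : Fin q) (m : ℕ) :
    ∫ x in univ.pi fun _ => Ioi (0 : ℝ), x i ^ m * mvGammaPdf q lam θ a x t =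
      (ascPochhammer ℝ m).eval (lam * t) / (a i * (1 - θ)) ^ m := by
  have hθ : |θ| < 1 := abs_lt.2 ⟨by linarith, hθ1⟩
  have hx (x : Fin q → ℝ) : ∏ k, x k ^ (Pi.single i m : Fin q → ℕ) k = x i ^ m :=
    Fintype.prod_apply_pi_single (fun _ => pow_zero _) i m
  have h := integral_prod_pow_mul_mvGammaPdf_of_hasSum i.pos hs ha hθ0 hθ1.le (Pi.single i m)
    (((hasSum_negBinomialPMFReal_mul_ascPochhammer (r := lam * t) hθ m).div_const
      (a i ^ m)).congr_fun fun n => ?_)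
  · simp only [hx] at h
    rw [h, mul_pow]
    ring
  · rw [Fintype.prod_apply_pi_single
      (f := fun k e => (ascPochhammer ℝ e).eval (n + lam * t) / a k ^ e) (fun _ => by simp),
      mul_div_assoc]

lemma integral_mul_mul_mvGammaPdf (hs : 0 < lam * t) (ha : ∀ i, 0 < a i) (hθ0 : 0 ≤ θ)
    (hθ1 : θ < 1) {i j : Fin q} (hij : i ≠ j) :
    ∫ x in univ.pi fun _ => Ioi (0 : ℝ), x i * x j * mvGammaPdf q lam θ a x t =
      lam * t * (lam * t + θ) / (a i * a j * (1 - θ) ^ 2) := by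
  have hθ : |θ| < 1 := abs_lt.2 ⟨by linarith, hθ1⟩
  have hw (f : Fin q → ℕ → ℝ) (hf : ∀ k, f k 0 = 1) :
      ∏ k, f k ((Pi.single i 1 + Pi.single j 1 : Fin q → ℕ) k) = f i 1 * f j 1 := by
    rw [Fintype.prod_eq_mul i j hij fun k hk => by simp [hk.1, hk.2, hf]]
    simp [hij, hij.symm]
  have hx (x : Fin q → ℝ) :
      ∏ k, x k ^ (Pi.single i 1 + Pi.single j 1 : Fin q → ℕ) k = x i * x j := by
    simpa using hw (fun k e => x k ^ e) fun _ => pow_zero _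
  have h := integral_prod_pow_mul_mvGammaPdf_of_hasSum i.pos hs ha hθ0 hθ1.le
    (Pi.single i 1 + Pi.single j 1)
    (((hasSum_negBinomialPMFReal_mul_add_sq (r := lam * t) hθ).div_const (a i * a j)).congr_fun
      fun n => ?_)
  · simp only [hx] at h
    rw [h, div_div, mul_comm ((1 - θ) ^ 2)]
  · rw [hw (fun k e => (ascPochhammer ℝ e).eval (n + lam * t) / a k ^ e) fun _ => by simp]
    simp only [ascPochhammer_one, Polynomial.eval_X, pow_one]
    ring

end MvGammaPdf

theorem mvGammaPdf_mean_and_covariance_general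
    (q : ℕ) (lam θ : ℝ) (hlam : 0 < lam) (hθ0 : 0 < θ) (hθ1 : θ < 1)
    (a : Fin q → ℝ) (ha : ∀ i, 0 < a i) (t : ℝ) (ht : 0 < t) :
    (∀ i : Fin q,
      (∫ x in Set.univ.pi fun _ : Fin q => Set.Ioi (0 : ℝ), x i * mvGammaPdf q lam θ a x t)
        = lam * t / (a i * (1 - θ))) ∧
    (∀ i j : Fin q, i ≠ j →
      (∫ x in Set.univ.pi fun _ : Fin q => Set.Ioi (0 : ℝ), x i * x j * mvGammaPdf q lam θ a x t)
          = lam * t * (lam * t + θ) / (a i * a j * (1 - θ) ^ 2) ∧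
      (∫ x in Set.univ.pi fun _ : Fin q => Set.Ioi (0 : ℝ), x i * x j * mvGammaPdf q lam θ a x t)
          - (∫ x in Set.univ.pi fun _ : Fin q => Set.Ioi (0 : ℝ), x i * mvGammaPdf q lam θ a x t)
            * (∫ x in Set.univ.pi fun _ : Fin q => Set.Ioi (0 : ℝ), x j * mvGammaPdf q lam θ a x t)
          = lam * t * θ / (a i * a j * (1 - θ) ^ 2)) ∧
    (∀ i : Fin q,
      (∫ x in Set.univ.pi fun _ : Fin q => Set.Ioi (0 : ℝ), x i ^ 2 * mvGammaPdf q lam θ a x t)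
          - (∫ x in Set.univ.pi fun _ : Fin q => Set.Ioi (0 : ℝ), x i * mvGammaPdf q lam θ a x t) ^ 2
        = lam * t / (a i ^ 2 * (1 - θ) ^ 2)) := by
  have hs : 0 < lam * t := mul_pos hlam ht
  have h1θ : 0 < 1 - θ := sub_pos.2 hθ1
  have mean (i : Fin q) : ∫ x in univ.pi fun _ => Ioi (0 : ℝ),
      x i * mvGammaPdf q lam θ a x t = lam * t / (a i * (1 - θ)) := by
    simpa using integral_pow_mul_mvGammaPdf hs ha hθ0.le hθ1 i 1
  have second_moment (i : Fin q) : ∫ x in univ.pi fun _ => Ioi (0 : ℝ),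
      x i ^ 2 * mvGammaPdf q lam θ a x t = lam * t * (lam * t + 1) / (a i * (1 - θ)) ^ 2 := by
    simpa [ascPochhammer_succ_eval] using integral_pow_mul_mvGammaPdf hs ha hθ0.le hθ1 i 2
  refine ⟨mean, fun i j hij => ⟨integral_mul_mul_mvGammaPdf hs ha hθ0.le hθ1 hij, ?_⟩, fun i => ?_⟩
  · rw [integral_mul_mul_mvGammaPdf hs ha hθ0.le hθ1 hij, mean, mean]
    field_simp
    ring
  · rw [second_moment, mean]
    field_simp
    ring

theorem mvGammaPdf_mean_and_covariance
    (q : ℕ) (hq : 1 ≤ q) (lam θ : ℝ) (hlam : 0 < lam) (hθ0 : 0 < θ) (hθ1 : θ < 1)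
    (a : Fin q → ℝ) (ha : ∀ i, 0 < a i) (t : ℝ) (ht : 0 < t) :
    (∀ i : Fin q,
      (∫ x in Set.univ.pi fun _ : Fin q => Set.Ioi (0 : ℝ), x i * mvGammaPdf q lam θ a x t)
        = lam * t / (a i * (1 - θ))) ∧
    (∀ i j : Fin q, i ≠ j →
      (∫ x in Set.univ.pi fun _ : Fin q => Set.Ioi (0 : ℝ), x i * x j * mvGammaPdf q lam θ a x t)
          = lam * t * (lam * t + θ) / (a i * a j * (1 - θ) ^ 2) ∧
      (∫ x in Set.univ.pi fun _ : Fin q => Set.Ioi (0 : ℝ), x i * x j * mvGammaPdf q lam θ a x t)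
          - (∫ x in Set.univ.pi fun _ : Fin q => Set.Ioi (0 : ℝ), x i * mvGammaPdf q lam θ a x t)
            * (∫ x in Set.univ.pi fun _ : Fin q => Set.Ioi (0 : ℝ), x j * mvGammaPdf q lam θ a x t)
          = lam * t * θ / (a i * a j * (1 - θ) ^ 2)) ∧
    (∀ i : Fin q,
      (∫ x in Set.univ.pi fun _ : Fin q => Set.Ioi (0 : ℝ), x i ^ 2 * mvGammaPdf q lam θ a x t)
          - (∫ x in Set.univ.pi fun _ : Fin q => Set.Ioi (0 : ℝ), x i * mvGammaPdf q lam θ a x t) ^ 2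
        = lam * t / (a i ^ 2 * (1 - θ) ^ 2)) :=
  mvGammaPdf_mean_and_covariance_general q lam θ hlam hθ0 hθ1 a ha t ht
end

section
/- Codifference identities for the multivariate gamma subordinator: for every t > 0 and all indices i ≠ j in {1,…,q}, the complex-valued integral ∫_{(0,∞)^q} e^{𝕚(x_i − x_j)} · g(x,t) dx equals ( a_i a_j (1−θ) / ( a_i a_j (1−θ) + 𝕚 a_i − 𝕚 a_j + 1 ) )^{λt}, and moreover ∫_{(0,∞)^q} e^{𝕚 x_i} · g(x,t) dx = ( a_i(1−θ) / ( a_i(1−θ) − 𝕚 ) )^{λt}, where 𝕚 = √(−1) and z^{λt} denotes the principal complex power (note that both bases lie in the right half-plane). -/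
open scoped BigOperators
open MeasureTheory Complex

/-!
Expanding the series, `mvGammaPdf q lam θ a · t` is a mixture over `n` of products of
independent Gamma(`n + c`, `a k`) densities, `c = lam * t`, with negative binomial weights
`(1 - θ) ^ c Γ(n + c) θ ^ n / (Γ(c) n!)`. Its Fourier transform at `w` is therefore the series
`∑ₙ weightₙ ∏ₖ ψₖ ^ (n + c)` with `ψₖ = a k / (a k - i w k)`, which the binomial series for
`(1 - z) ^ (-c)` sums to `(1 - θ) ^ c (1 - θ ∏ ψₖ) ^ (-c) ∏ ψₖ ^ c`; its absolute convergence
for `|θ| < 1` also justifies exchanging sum and integral. The one-dimensional input is the Gamma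
integral `∫ y ^ (p - 1) e ^ (-d y) dy = Γ(p) d ^ (-p)` for complex `d` in the right half-plane,
obtained from `d > 0` by analytic continuation. The two identities are the cases `w = eᵢ - eⱼ`
and `w = eᵢ`; all bases involved lie in the right half-plane, where principal powers are
multiplicative.
-/

open Set Filter Topology
open scoped Nat

namespace Complex

lemma re_inv_pos {z : ℂ} (hz : 0 < z.re) : 0 < z⁻¹.re := by
  rw [inv_re]
  exact div_pos hz (normSq_pos.2 (ne_zero_of_re_pos hz))

lemma re_ofReal_div_pos {M : ℝ} {D : ℂ} (hM : 0 < M) (hD : 0 < D.re) :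
    0 < ((M : ℂ) / D).re := by
  simpa [div_re] using div_pos (mul_pos hM hD) (normSq_pos.2 (ne_zero_of_re_pos hD))

lemma mul_cpow_of_re_pos {z w : ℂ} (hz : 0 < z.re) (hw : 0 < w.re) (s : ℂ) :
    (z * w) ^ s = z ^ s * w ^ s := by
  have haz := abs_lt.1 (abs_arg_lt_pi_div_two_iff.2 (Or.inl hz))
  have haw := abs_lt.1 (abs_arg_lt_pi_div_two_iff.2 (Or.inl hw))
  rw [cpow_def_of_ne_zero (mul_ne_zero (ne_zero_of_re_pos hz) (ne_zero_of_re_pos hw)),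
    cpow_def_of_ne_zero (ne_zero_of_re_pos hz), cpow_def_of_ne_zero (ne_zero_of_re_pos hw),
    log_mul (ne_zero_of_re_pos hz) (ne_zero_of_re_pos hw) ⟨by linarith, by linarith⟩, add_mul,
    exp_add]

lemma div_cpow_of_re_pos {z w : ℂ} (hz : 0 < z.re) (hw : 0 < w.re) (s : ℂ) :
    (z / w) ^ s = z ^ s / w ^ s := by
  have harg : w.arg ≠ Real.pi := fun h => by linarith [(arg_eq_pi_iff.1 h).1]
  rw [div_eq_mul_inv, mul_cpow_of_re_pos hz (re_inv_pos hw), inv_cpow _ _ harg, div_eq_mul_inv]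

lemma one_sub_cpow_mul_cpow_neg_mul_cpow {θ : ℝ} (hθ : |θ| < 1) {M D : ℂ} (hD : D ≠ 0)
    (hz : 0 < (M / D).re) (hz1 : ‖M / D‖ ≤ 1) (s : ℂ) :
    (1 - θ : ℂ) ^ s * (1 - θ * (M / D)) ^ (-s) * (M / D) ^ s
      = ((1 - θ) * M / (D - θ * M)) ^ s := by
  have hθ1 : 0 < (1 - θ : ℂ).re := by
    simp only [sub_re, one_re, ofReal_re]
    linarith [le_abs_self θ]
  have hθz : 0 < (1 - θ * (M / D)).re := by
    have := (re_le_norm ((θ : ℂ) * (M / D))).trans_lt (lt_of_le_of_lt (by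
      rw [norm_mul, norm_real, Real.norm_eq_abs]
      exact mul_le_of_le_one_right (abs_nonneg θ) hz1) hθ)
    simpa [sub_re] using this
  have hden : 1 - θ * (M / D) = (D - θ * M) / D := by field_simp
  have hN : D - θ * M ≠ 0 := (div_ne_zero_iff.1 (hden ▸ ne_zero_of_re_pos hθz)).1
  have hbase : (1 - θ) * M / (D - θ * M) = (1 - θ) * (M / D) / (1 - θ * (M / D)) := by
    rw [hden]
    field_simp
  rw [hbase, div_cpow_of_re_pos (by simpa using mul_pos hθ1 hz) hθz, mul_cpow_of_re_pos hθ1 hz,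
    cpow_neg]
  ring

lemma ofReal_ne_neg_natCast {c : ℝ} (hc : 0 < c) (k : ℕ) : (c : ℂ) ≠ -k := fun h => by
  have := congrArg re h
  simp only [ofReal_re, neg_re, natCast_re] at this
  linarith [k.cast_nonneg (α := ℝ)]

theorem hasSum_Gamma_add_nat_div_factorial_mul_pow {c : ℂ} (hc : ∀ k : ℕ, c ≠ -k) {z : ℂ}
    (hz : ‖z‖ < 1) :
    HasSum (fun n : ℕ => Gamma (c + n) / n ! * z ^ n) (Gamma c * (1 - z) ^ (-c)) := by
  have hseries := (one_div_one_sub_cpow_hasFPowerSeriesOnBall_zero c).hasSum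
    (y := z) (by rw [mem_eball_zero_iff, ← ofReal_norm, ENNReal.ofReal_lt_one]; exact hz)
  simp only [FormalMultilinearSeries.ofScalars_apply_eq, zero_add, smul_eq_mul] at hseries
  have hcoeff (n : ℕ) : Gamma (c + n) / n ! = Gamma c * Ring.choose (c + n - 1) n := by
    have hpoch : (n ! : ℂ) * Ring.choose (c + n - 1) n = (ascPochhammer ℂ n).eval c := by
      rw [← Ring.multichoose_eq, ← nsmul_eq_mul, Ring.factorial_nsmul_multichoose_eq_ascPochhammer,
        Polynomial.ascPochhammer_smeval_eq_eval]
    rw [← Gamma_add_nat_div_Gamma_eq c hc, eq_div_iff (Gamma_ne_zero hc)] at hpoch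
    rw [div_eq_iff (Nat.cast_ne_zero.2 n.factorial_ne_zero)]
    linear_combination -hpoch
  simpa only [hcoeff, mul_assoc, one_div, cpow_neg] using hseries.mul_left (Gamma c)

lemma continuousOn_cpow_mul_exp_neg_mul (u d : ℂ) :
    ContinuousOn (fun t : ℝ => (t : ℂ) ^ u * cexp (-(d * t))) (Ioi 0) := by
  refine ContinuousOn.mul (fun t ht => ?_) (by fun_prop)
  exact ((continuousAt_cpow_const (ofReal_mem_slitPlane.2 ht)).comp
    continuous_ofReal.continuousAt).continuousWithinAt

lemma norm_cpow_mul_exp_neg_mul {t : ℝ} (ht : 0 < t) (u d : ℂ) :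
    ‖(t : ℂ) ^ u * cexp (-(d * t))‖ = t ^ u.re * Real.exp (-d.re * t) := by
  rw [norm_mul, norm_cpow_eq_rpow_re_of_pos ht, norm_exp]
  simp

lemma integrableOn_cpow_mul_exp_neg_mul_Ioi {a d : ℂ} (ha : 0 < a.re) (hd : 0 < d.re) :
    IntegrableOn (fun t : ℝ => (t : ℂ) ^ (a - 1) * cexp (-(d * t))) (Ioi 0) := by
  refine (integrableOn_rpow_mul_exp_neg_mul_rpow (s := a.re - 1) (by linarith) zero_lt_one hd
    |>.congr' ((continuousOn_cpow_mul_exp_neg_mul _ d).aestronglyMeasurable measurableSet_Ioi) ?_)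
  filter_upwards [self_mem_ae_restrict measurableSet_Ioi] with t (ht : 0 < t)
  rw [norm_cpow_mul_exp_neg_mul ht, Real.rpow_one,
    Real.norm_of_nonneg (mul_nonneg (Real.rpow_nonneg ht.le _) (Real.exp_pos _).le)]
  simp

lemma differentiableOn_integral_cpow_mul_exp_neg_mul {a : ℂ} (ha : 0 < a.re) :
    DifferentiableOn ℂ (fun d : ℂ => ∫ t : ℝ in Ioi 0, (t : ℂ) ^ (a - 1) * cexp (-(d * t)))
      {d | 0 < d.re} := by
  intro d₀ (hd₀ : 0 < d₀.re)
  have hε : 0 < d₀.re / 2 := by positivity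
  have hderiv (t : ℝ) (d : ℂ) : HasDerivAt (fun d : ℂ => (t : ℂ) ^ (a - 1) * cexp (-(d * t)))
      ((t : ℂ) ^ (a - 1) * cexp (-(d * t)) * -t) d := by
    rw [mul_assoc]
    exact ((hasDerivAt_mul_const (t : ℂ)).neg.cexp).const_mul _
  have hbound : ∀ᵐ t : ℝ ∂(volume.restrict (Ioi 0)), ∀ d ∈ Metric.ball d₀ (d₀.re / 2),
      ‖(t : ℂ) ^ (a - 1) * cexp (-(d * t)) * -t‖ ≤ t ^ a.re * Real.exp (-(d₀.re / 2) * t) := by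
    filter_upwards [self_mem_ae_restrict measurableSet_Ioi] with t (ht : 0 < t) d hd
    have hre : d₀.re / 2 ≤ d.re := by
      have := (abs_re_le_norm (d - d₀)).trans (mem_ball_iff_norm.1 hd).le
      rw [sub_re] at this
      linarith [neg_abs_le (d.re - d₀.re)]
    calc ‖(t : ℂ) ^ (a - 1) * cexp (-(d * t)) * -t‖
        = t ^ (a.re - 1) * t * Real.exp (-d.re * t) := by
          rw [norm_mul, norm_cpow_mul_exp_neg_mul ht, norm_neg, norm_real,
            Real.norm_of_nonneg ht.le, sub_re, one_re]
          ring
      _ ≤ t ^ a.re * Real.exp (-(d₀.re / 2) * t) := by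
          rw [← Real.rpow_add_one ht.ne', sub_add_cancel]
          gcongr
  have hbound_int := integrableOn_rpow_mul_exp_neg_mul_rpow (s := a.re) (by linarith) zero_lt_one hε
  simp only [Real.rpow_one] at hbound_int
  exact (hasDerivAt_integral_of_dominated_loc_of_deriv_le (Metric.ball_mem_nhds d₀ hε)
    (Eventually.of_forall fun d =>
      (continuousOn_cpow_mul_exp_neg_mul _ d).aestronglyMeasurable measurableSet_Ioi)
    (integrableOn_cpow_mul_exp_neg_mul_Ioi ha hd₀)
    (((continuousOn_cpow_mul_exp_neg_mul _ d₀).mul continuous_ofReal.neg.continuousOn)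
      |>.aestronglyMeasurable measurableSet_Ioi) hbound hbound_int
    (Eventually.of_forall fun t d _ => hderiv t d)).2.differentiableAt.differentiableWithinAt

theorem integral_cpow_mul_exp_neg_mul_Ioi_of_re_pos {a d : ℂ} (ha : 0 < a.re) (hd : 0 < d.re) :
    ∫ t : ℝ in Ioi 0, (t : ℂ) ^ (a - 1) * cexp (-(d * t)) = (1 / d) ^ a * Gamma a := by
  have hU : IsOpen {d : ℂ | 0 < d.re} := isOpen_lt continuous_const continuous_re
  have hrhs : DifferentiableOn ℂ (fun d : ℂ => (1 / d) ^ a * Gamma a) {d | 0 < d.re} :=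
    fun d (hd : 0 < d.re) => by
      have hd' : 1 / d ∈ slitPlane := mem_slitPlane_iff.2 (Or.inl (by simpa using re_inv_pos hd))
      exact ((differentiableAt_const 1).div differentiableAt_id (ne_zero_of_re_pos hd)
        |>.cpow_const hd').mul_const _ |>.differentiableWithinAt
  have hreal : ∃ᶠ d in 𝓝[≠] (1 : ℂ),
      ∫ t : ℝ in Ioi 0, (t : ℂ) ^ (a - 1) * cexp (-(d * t)) = (1 / d) ^ a * Gamma a := by
    have hlim : Tendsto ((↑) : ℝ → ℂ) (𝓝[>] 1) (𝓝[≠] 1) :=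
      tendsto_nhdsWithin_of_tendsto_nhds_of_eventually_within _
        (continuous_ofReal.tendsto' 1 1 ofReal_one |>.mono_left nhdsWithin_le_nhds)
        (eventually_nhdsWithin_of_forall fun r (hr : 1 < r) => by
          simpa [← ofReal_one] using hr.ne')
    refine hlim.frequently (Eventually.frequently ?_)
    filter_upwards [self_mem_nhdsWithin] with r (hr : 1 < r)
    exact_mod_cast integral_cpow_mul_exp_neg_mul_Ioi ha (by linarith)
  exact ((differentiableOn_integral_cpow_mul_exp_neg_mul ha).analyticOnNhd hU)
    |>.eqOn_of_preconnected_of_frequently_eq (hrhs.analyticOnNhd hU)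
      (convex_halfSpace_re_gt 0).isPreconnected (by simp) hreal hd

end Complex

theorem Real.summable_Gamma_add_nat_div_factorial_mul_pow {c : ℝ} (hc : 0 < c) {x : ℝ}
    (hx : |x| < 1) : Summable fun n : ℕ => Real.Gamma (c + n) / n ! * x ^ n := by
  refine Complex.summable_ofReal.1 ?_
  simpa [← Gamma_ofReal] using (hasSum_Gamma_add_nat_div_factorial_mul_pow
    (ofReal_ne_neg_natCast hc) (z := x) (by simpa using hx)).summable

noncomputable def expCharFun (a w : ℝ) : ℂ := a / (a - I * w)

lemma expCharFun_zero {a : ℝ} (ha : 0 < a) : expCharFun a 0 = 1 := by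
  simp [expCharFun, ha.ne']

lemma expCharFun_re_pos {a : ℝ} (ha : 0 < a) (w : ℝ) : 0 < (expCharFun a w).re :=
  re_ofReal_div_pos ha (by simpa using ha)

lemma norm_expCharFun_le_one {a : ℝ} (ha : 0 < a) (w : ℝ) : ‖expCharFun a w‖ ≤ 1 := by
  have hle : a ≤ ‖(a : ℂ) - I * w‖ := by simpa using re_le_norm ((a : ℂ) - I * w)
  rw [expCharFun, norm_div, norm_real, Real.norm_of_nonneg ha.le]
  exact div_le_one_of_le₀ hle (norm_nonneg _)

/-- `Γ(p)⁻¹ * gammaKernel p a` is the density of the Gamma distribution with shape `p`, rate `a`. -/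
noncomputable def gammaKernel (p a y : ℝ) : ℝ := (a * y) ^ p / y * Real.exp (-(a * y))

section GammaKernel

variable {p a : ℝ}

lemma gammaKernel_mul_cexp {y : ℝ} (ha : 0 < a) (hy : 0 < y) (w : ℝ) :
    (gammaKernel p a y : ℂ) * cexp (I * (w * y))
      = (a : ℂ) ^ (p : ℂ) * ((y : ℂ) ^ ((p : ℂ) - 1) * cexp (-((a - I * w) * y))) := by
  have hy' : (y : ℂ) ≠ 0 := ofReal_ne_zero.2 hy.ne'
  rw [gammaKernel, Real.mul_rpow ha.le hy.le, cpow_sub _ _ hy', cpow_one]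
  push_cast [ofReal_cpow ha.le, ofReal_cpow hy.le]
  rw [mul_div_assoc, mul_assoc, mul_div_assoc', ← exp_add]
  ring_nf

lemma integrableOn_gammaKernel_mul_cexp (hp : 0 < p) (ha : 0 < a) (w : ℝ) :
    IntegrableOn (fun y : ℝ => (gammaKernel p a y : ℂ) * cexp (I * (w * y))) (Ioi 0) :=
  IntegrableOn.congr_fun (Integrable.const_mul
    (integrableOn_cpow_mul_exp_neg_mul_Ioi (a := p) (d := a - I * w) (by simpa) (by simpa)) _)
    (fun _ hy => (gammaKernel_mul_cexp ha hy w).symm) measurableSet_Ioi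

lemma integral_gammaKernel_mul_cexp (hp : 0 < p) (ha : 0 < a) (w : ℝ) :
    ∫ y in Ioi 0, (gammaKernel p a y : ℂ) * cexp (I * (w * y))
      = Gamma p * expCharFun a w ^ (p : ℂ) := by
  have hd : 0 < ((a : ℂ) - I * w).re := by simpa
  rw [setIntegral_congr_fun measurableSet_Ioi (fun y hy => gammaKernel_mul_cexp ha hy w),
    integral_const_mul, integral_cpow_mul_exp_neg_mul_Ioi_of_re_pos (by simpa) hd, ← mul_assoc,
    ← mul_cpow_of_re_pos (by simpa) (by simpa using re_inv_pos hd), mul_comm, mul_one_div]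
  rfl

lemma integral_norm_gammaKernel_mul_cexp (hp : 0 < p) (ha : 0 < a) (w : ℝ) :
    ∫ y in Ioi 0, ‖(gammaKernel p a y : ℂ) * cexp (I * (w * y))‖ = Real.Gamma p := by
  have hnorm (y : ℝ) (hy : y ∈ Ioi 0) : ‖(gammaKernel p a y : ℂ) * cexp (I * (w * y))‖
      = a ^ p * (y ^ (p - 1) * Real.exp (-(a * y))) := by
    have hy : 0 < y := hy
    rw [norm_mul, norm_real, ← ofReal_mul, norm_exp_I_mul_ofReal, mul_one, gammaKernel,
      Real.norm_of_nonneg (by positivity), Real.mul_rpow ha.le hy.le, Real.rpow_sub_one hy.ne']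
    ring
  rw [setIntegral_congr_fun measurableSet_Ioi hnorm, integral_const_mul,
    Real.integral_rpow_mul_exp_neg_mul_Ioi hp ha, ← mul_assoc,
    ← Real.mul_rpow ha.le (by positivity), mul_one_div_cancel ha.ne', Real.one_rpow, one_mul]

end GammaKernel

section Product

variable {ι : Type*} [Fintype ι] {p : ℝ} {a : ι → ℝ}

lemma integrableOn_pi_prod_gammaKernel_mul_cexp (hp : 0 < p) (ha : ∀ k, 0 < a k) (w : ι → ℝ) :
    IntegrableOn (fun x : ι → ℝ => ∏ k, (gammaKernel p (a k) (x k) : ℂ) * cexp (I * (w k * x k)))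
      (univ.pi fun _ => Ioi 0) := by
  rw [IntegrableOn, volume_pi, Measure.restrict_pi_pi]
  exact Integrable.fintype_prod fun k => integrableOn_gammaKernel_mul_cexp hp (ha k) (w k)

lemma integral_pi_prod_gammaKernel_mul_cexp (hp : 0 < p) (ha : ∀ k, 0 < a k) (w : ι → ℝ) :
    ∫ x in univ.pi fun _ => Ioi 0, ∏ k, (gammaKernel p (a k) (x k) : ℂ) * cexp (I * (w k * x k))
      = Gamma p ^ Fintype.card ι * ∏ k, expCharFun (a k) (w k) ^ (p : ℂ) := by
  rw [volume_pi, Measure.restrict_pi_pi,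
    integral_fintype_prod_eq_prod fun k y => (gammaKernel p (a k) y : ℂ) * cexp (I * (w k * y))]
  simp only [integral_gammaKernel_mul_cexp hp (ha _), Finset.prod_mul_distrib, Finset.prod_const,
    Finset.card_univ]

lemma integral_norm_pi_prod_gammaKernel_mul_cexp (hp : 0 < p) (ha : ∀ k, 0 < a k) (w : ι → ℝ) :
    ∫ x in univ.pi fun _ => Ioi 0, ‖∏ k, (gammaKernel p (a k) (x k) : ℂ) * cexp (I * (w k * x k))‖
      = Real.Gamma p ^ Fintype.card ι := by
  simp only [norm_prod]
  rw [volume_pi, Measure.restrict_pi_pi,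
    integral_fintype_prod_eq_prod fun k y => ‖(gammaKernel p (a k) y : ℂ) * cexp (I * (w k * y))‖]
  simp only [integral_norm_gammaKernel_mul_cexp hp (ha _), Finset.prod_const, Finset.card_univ]

end Product

lemma div_mul_pow_pred_mul_pow {K : Type*} [Field K] {g : K} {q : ℕ} (hq : q ≠ 0) (x y : K) :
    x / (y * g ^ (q - 1)) * g ^ q = g / y * x := by
  obtain ⟨m, rfl⟩ := Nat.exists_eq_succ_of_ne_zero hq
  rcases eq_or_ne g 0 with rfl | hg
  · simp
  rw [Nat.succ_sub_one, pow_succ]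
  field_simp

noncomputable def mvGammaCharTerm (q : ℕ) (c θ : ℝ) (a w : Fin q → ℝ) (n : ℕ)
    (x : Fin q → ℝ) : ℂ :=
  ((θ ^ n / (n ! * Real.Gamma (n + c) ^ (q - 1)) : ℝ) : ℂ) *
    ∏ k, (gammaKernel (n + c) (a k) (x k) : ℂ) * cexp (I * (w k * x k))

lemma cexp_mul_mvGammaPdf (q : ℕ) (lam θ : ℝ) (a w x : Fin q → ℝ) (t : ℝ) :
    cexp (I * (w ⬝ᵥ x : ℝ)) * mvGammaPdf q lam θ a x t
      = (((1 - θ) ^ (lam * t) / Real.Gamma (lam * t) : ℝ) : ℂ) *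
        ∑' n : ℕ, mvGammaCharTerm q (lam * t) θ a w n x := by
  simp only [mvGammaCharTerm]
  rw [dotProduct, ofReal_sum, Finset.mul_sum, exp_sum, mvGammaPdf, ofReal_mul, ofReal_tsum,
    ← tsum_mul_left, ← tsum_mul_left, ← tsum_mul_left]
  congr 1 with n
  simp only [ofReal_mul, ofReal_prod, Finset.prod_mul_distrib, gammaKernel]
  ring

section CharTerm

variable {q : ℕ} {c θ : ℝ} {a : Fin q → ℝ}

lemma integrableOn_mvGammaCharTerm (hc : 0 < c) (ha : ∀ k, 0 < a k) (w : Fin q → ℝ) (n : ℕ) :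
    IntegrableOn (mvGammaCharTerm q c θ a w n) (univ.pi fun _ => Ioi 0) :=
  (integrableOn_pi_prod_gammaKernel_mul_cexp (by positivity) ha w).const_mul _

variable [NeZero q]

lemma integral_mvGammaCharTerm (hc : 0 < c) (ha : ∀ k, 0 < a k) (w : Fin q → ℝ) (n : ℕ) :
    ∫ x in univ.pi fun _ => Ioi 0, mvGammaCharTerm q c θ a w n x
      = Gamma (c + n) / n ! * (θ * ∏ k, expCharFun (a k) (w k)) ^ n
        * ∏ k, expCharFun (a k) (w k) ^ (c : ℂ) := by
  have hp : 0 < (n : ℝ) + c := by positivity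
  have hsplit (k : Fin q) : expCharFun (a k) (w k) ^ (((n + c : ℝ)) : ℂ)
      = expCharFun (a k) (w k) ^ n * expCharFun (a k) (w k) ^ (c : ℂ) := by
    rw [ofReal_add, ofReal_natCast,
      cpow_add _ _ (ne_zero_of_re_pos (expCharFun_re_pos (ha k) _)), cpow_natCast]
  simp only [mvGammaCharTerm]
  rw [integral_const_mul, integral_pi_prod_gammaKernel_mul_cexp hp ha, Fintype.card_fin,
    Finset.prod_congr rfl fun k _ => hsplit k, Finset.prod_mul_distrib, Finset.prod_pow,
    Gamma_ofReal, ← mul_assoc, ← ofReal_pow, ← ofReal_mul, div_mul_pow_pred_mul_pow (NeZero.ne q),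
    mul_pow, add_comm (n : ℝ) c]
  push_cast [← Gamma_ofReal]
  ring

lemma integral_norm_mvGammaCharTerm (hc : 0 < c) (ha : ∀ k, 0 < a k) (w : Fin q → ℝ) (n : ℕ) :
    ∫ x in univ.pi fun _ => Ioi 0, ‖mvGammaCharTerm q c θ a w n x‖
      = Real.Gamma (c + n) / n ! * |θ| ^ n := by
  have hp : 0 < (n : ℝ) + c := by positivity
  simp only [mvGammaCharTerm, norm_mul, norm_real, Real.norm_eq_abs]
  rw [integral_const_mul, integral_norm_pi_prod_gammaKernel_mul_cexp hp ha, Fintype.card_fin,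
    abs_div, abs_pow, abs_of_pos (mul_pos (Nat.cast_pos.2 n.factorial_pos)
      (pow_pos (Real.Gamma_pos_of_pos hp) _)),
    div_mul_pow_pred_mul_pow (NeZero.ne q), add_comm (n : ℝ) c]

end CharTerm

lemma norm_mul_prod_expCharFun_lt_one {ι : Type*} [Fintype ι] {θ : ℝ} (hθ : |θ| < 1)
    {a : ι → ℝ} (ha : ∀ k, 0 < a k) (w : ι → ℝ) :
    ‖(θ : ℂ) * ∏ k, expCharFun (a k) (w k)‖ < 1 := by
  rw [norm_mul, norm_real, Real.norm_eq_abs, norm_prod]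
  calc |θ| * ∏ k, ‖expCharFun (a k) (w k)‖ ≤ |θ| * 1 := by
        gcongr
        exact Finset.prod_le_one (fun _ _ => norm_nonneg _)
          fun k _ => norm_expCharFun_le_one (ha k) _
    _ < 1 := by linarith

theorem integral_cexp_mul_mvGammaPdf {q : ℕ} [NeZero q] {lam θ t : ℝ} (hc : 0 < lam * t)
    (hθ : |θ| < 1) {a : Fin q → ℝ} (ha : ∀ k, 0 < a k) (w : Fin q → ℝ) :
    ∫ x in univ.pi fun _ : Fin q => Ioi (0 : ℝ),
        cexp (I * (w ⬝ᵥ x : ℝ)) * mvGammaPdf q lam θ a x t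
      = (1 - θ : ℂ) ^ ((lam * t : ℝ) : ℂ)
        * (1 - θ * ∏ k, expCharFun (a k) (w k)) ^ (-((lam * t : ℝ) : ℂ))
        * ∏ k, expCharFun (a k) (w k) ^ ((lam * t : ℝ) : ℂ) := by
  set c := lam * t
  have hsum := hasSum_Gamma_add_nat_div_factorial_mul_pow (ofReal_ne_neg_natCast hc)
    (norm_mul_prod_expCharFun_lt_one hθ ha w)
  have hswap := integral_tsum_of_summable_integral_norm
    (integrableOn_mvGammaCharTerm (θ := θ) hc ha w)
    (by simpa only [integral_norm_mvGammaCharTerm hc ha] using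
      Real.summable_Gamma_add_nat_div_factorial_mul_pow hc (x := |θ|) (by rwa [abs_abs]))
  have hnorm : (((1 - θ) ^ c / Real.Gamma c : ℝ) : ℂ) * Gamma c = (1 - θ : ℂ) ^ (c : ℂ) := by
    rw [Gamma_ofReal, ← ofReal_mul, div_mul_cancel₀ _ (Real.Gamma_pos_of_pos hc).ne',
      ofReal_cpow (by linarith [le_abs_self θ])]
    push_cast
    rfl
  simp_rw [cexp_mul_mvGammaPdf]
  rw [integral_const_mul, ← hswap]
  simp_rw [integral_mvGammaCharTerm hc ha]
  rw [tsum_mul_right, hsum.tsum_eq, ← hnorm]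
  ring

theorem integral_cexp_mul_mvGammaPdf_single {q : ℕ} [NeZero q] {lam θ t : ℝ} (hc : 0 < lam * t)
    (hθ : |θ| < 1) {a : Fin q → ℝ} (ha : ∀ k, 0 < a k) (i : Fin q) :
    ∫ x in univ.pi fun _ : Fin q => Ioi (0 : ℝ), cexp (I * x i) * mvGammaPdf q lam θ a x t
      = (a i * (1 - θ) / (a i * (1 - θ) - I)) ^ ((lam * t : ℝ) : ℂ) := by
  have h := integral_cexp_mul_mvGammaPdf hc hθ ha (Pi.single i 1)
  rw [Fintype.prod_eq_single i fun k hk => by simp [hk, expCharFun_zero (ha k)],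
    Fintype.prod_eq_single i fun k hk => by simp [hk, expCharFun_zero (ha k)],
    Pi.single_eq_same, expCharFun, one_sub_cpow_mul_cpow_neg_mul_cpow hθ ?_ ?_ ?_] at h
  · simp only [single_dotProduct, one_mul] at h
    rw [h]
    congr 1
    push_cast
    ring
  · exact ne_zero_of_re_pos (by simpa using ha i)
  · exact expCharFun_re_pos (ha i) 1
  · exact norm_expCharFun_le_one (ha i) 1

theorem integral_cexp_sub_mul_mvGammaPdf {q : ℕ} [NeZero q] {lam θ t : ℝ} (hc : 0 < lam * t)
    (hθ : |θ| < 1) {a : Fin q → ℝ} (ha : ∀ k, 0 < a k) {i j : Fin q} (hij : i ≠ j) :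
    ∫ x in univ.pi fun _ : Fin q => Ioi (0 : ℝ),
        cexp (I * (x i - x j)) * mvGammaPdf q lam θ a x t
      = (a i * a j * (1 - θ) / (a i * a j * (1 - θ) + I * a i - I * a j + 1))
          ^ ((lam * t : ℝ) : ℂ) := by
  set D : ℂ := (a i - I * (1 : ℝ)) * (a j - I * (-1 : ℝ))
  have hD : 0 < D.re := by
    simpa [D] using add_pos (mul_pos (ha i) (ha j)) one_pos
  have hψ : expCharFun (a i) 1 * expCharFun (a j) (-1) = ((a i * a j : ℝ) : ℂ) / D := by
    rw [expCharFun, expCharFun, div_mul_div_comm, ofReal_mul]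
  have h := integral_cexp_mul_mvGammaPdf hc hθ ha (Pi.single i 1 - Pi.single j 1)
  rw [Fintype.prod_eq_mul i j hij fun k hk => by simp [hk.1, hk.2, expCharFun_zero (ha k)],
    Fintype.prod_eq_mul i j hij fun k hk => by simp [hk.1, hk.2, expCharFun_zero (ha k)]] at h
  simp only [Pi.sub_apply, Pi.single_eq_same, Pi.single_eq_of_ne hij, Pi.single_eq_of_ne hij.symm,
    sub_zero, zero_sub, sub_dotProduct, single_dotProduct, one_mul, ofReal_sub] at h
  rw [← mul_cpow_of_re_pos (expCharFun_re_pos (ha i) _) (expCharFun_re_pos (ha j) _), hψ,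
    one_sub_cpow_mul_cpow_neg_mul_cpow hθ (ne_zero_of_re_pos hD)
      (re_ofReal_div_pos (mul_pos (ha i) (ha j)) hD) (hψ ▸ ?_)] at h
  · rw [h]
    congr 1
    simp only [D]
    push_cast
    ring_nf
    rw [I_sq]
    ring
  · rw [norm_mul]
    exact mul_le_one₀ (norm_expCharFun_le_one (ha i) _) (norm_nonneg _)
      (norm_expCharFun_le_one (ha j) _)

theorem mvGammaPdf_codifference_identities_general
    (q : ℕ) (lam θ : ℝ) (hlam : 0 < lam) (hθ0 : 0 < θ) (hθ1 : θ < 1)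
    (a : Fin q → ℝ) (ha : ∀ i, 0 < a i) (t : ℝ) (ht : 0 < t)
    (i j : Fin q) (hij : i ≠ j) :
    (∫ x in Set.univ.pi fun _ : Fin q => Set.Ioi (0 : ℝ),
        Complex.exp (Complex.I * ((x i : ℂ) - (x j : ℂ))) * (mvGammaPdf q lam θ a x t : ℂ))
      = (((a i : ℂ) * (a j : ℂ) * (1 - (θ : ℂ))) /
          ((a i : ℂ) * (a j : ℂ) * (1 - (θ : ℂ)) + Complex.I * (a i : ℂ)
            - Complex.I * (a j : ℂ) + 1)) ^ ((lam * t : ℝ) : ℂ) ∧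
    (∫ x in Set.univ.pi fun _ : Fin q => Set.Ioi (0 : ℝ),
        Complex.exp (Complex.I * (x i : ℂ)) * (mvGammaPdf q lam θ a x t : ℂ))
      = (((a i : ℂ) * (1 - (θ : ℂ))) / ((a i : ℂ) * (1 - (θ : ℂ)) - Complex.I))
          ^ ((lam * t : ℝ) : ℂ) := by
  have : NeZero q := ⟨i.pos.ne'⟩
  have hc : 0 < lam * t := mul_pos hlam ht
  have hθ : |θ| < 1 := abs_lt.2 ⟨by linarith, hθ1⟩
  exact ⟨integral_cexp_sub_mul_mvGammaPdf hc hθ ha hij,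
    integral_cexp_mul_mvGammaPdf_single hc hθ ha i⟩

theorem mvGammaPdf_codifference_identities
    (q : ℕ) (hq : 1 ≤ q) (lam θ : ℝ) (hlam : 0 < lam) (hθ0 : 0 < θ) (hθ1 : θ < 1)
    (a : Fin q → ℝ) (ha : ∀ i, 0 < a i) (t : ℝ) (ht : 0 < t)
    (i j : Fin q) (hij : i ≠ j) :
    (∫ x in Set.univ.pi fun _ : Fin q => Set.Ioi (0 : ℝ),
        Complex.exp (Complex.I * ((x i : ℂ) - (x j : ℂ))) * (mvGammaPdf q lam θ a x t : ℂ))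
      = (((a i : ℂ) * (a j : ℂ) * (1 - (θ : ℂ))) /
          ((a i : ℂ) * (a j : ℂ) * (1 - (θ : ℂ)) + Complex.I * (a i : ℂ)
            - Complex.I * (a j : ℂ) + 1)) ^ ((lam * t : ℝ) : ℂ) ∧
    (∫ x in Set.univ.pi fun _ : Fin q => Set.Ioi (0 : ℝ),
        Complex.exp (Complex.I * (x i : ℂ)) * (mvGammaPdf q lam θ a x t : ℂ))
      = (((a i : ℂ) * (1 - (θ : ℂ))) / ((a i : ℂ) * (1 - (θ : ℂ)) - Complex.I))
          ^ ((lam * t : ℝ) : ℂ) :=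
  mvGammaPdf_codifference_identities_general q lam θ hlam hθ0 hθ1 a ha t ht i j hij
end
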